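/- arXiv:1306.3498 — 2 statements merged into one kernel-verified Lean document; each statement's English description precedes it below -/
import Mathlib

section
/- Let (X,⪯) be a partially ordered set with complete metric d, f, g : X → X with f(X) ⊆ g(X), g(X) closed, f g-nondecreasing. Suppose there exists λ ∈ (0,1/2) with d(fx,fy) ≤ λ·[d(gx,fx) + d(gy,fy)] for all x,y with gx ⪯ gy, there exists x₀ with gx₀ ⪯ fx₀, and (X,⪯,d) is g-regular. Then f and g have a coincidence point. -/
/-!
Starting from `x₀`, pick a Jungck sequence `g xₙ₊₁ = f xₙ`. Since `f` is `g`-nondecreasing, the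
sequence `g xₙ` is nondecreasing, so the Kannan condition applies to consecutive terms and gives
`d(g xₙ₊₁, g xₙ₊₂) ≤ λ/(1-λ) · d(g xₙ, g xₙ₊₁)` with `λ/(1-λ) < 1`. Hence `g xₙ` is Cauchy and
converges to some `g z` (as `g(X)` is closed). Regularity yields a subsequence below `g z`, to which
the Kannan condition applies against `z`; in the limit `d(g z, f z) ≤ λ · d(g z, f z)`, so
`f z = g z`.
-/

open Filter Topology

theorem le_div_one_sub_mul_of_le_mul_add {a b lam : ℝ} (hlam : lam < 1)
    (h : b ≤ lam * (a + b)) : b ≤ lam / (1 - lam) * a := by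
  rw [div_mul_eq_mul_div, le_div_iff₀ (by linarith)]
  linarith

theorem cauchySeq_of_dist_succ_le_mul {X : Type*} [PseudoMetricSpace X] {u : ℕ → X} {r : ℝ}
    (hr0 : 0 ≤ r) (hr1 : r < 1)
    (h : ∀ n, dist (u (n + 1)) (u (n + 2)) ≤ r * dist (u n) (u (n + 1))) : CauchySeq u := by
  have hgeom : ∀ n, dist (u n) (u (n + 1)) ≤ dist (u 0) (u 1) * r ^ n := by
    intro n
    induction n with
    | zero => simp
    | succ n ih =>
      calc dist (u (n + 1)) (u (n + 2)) ≤ r * dist (u n) (u (n + 1)) := h n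
        _ ≤ r * (dist (u 0) (u 1) * r ^ n) := mul_le_mul_of_nonneg_left ih hr0
        _ = dist (u 0) (u 1) * r ^ (n + 1) := by ring
  exact cauchySeq_of_le_geometric r _ hr1 hgeom

theorem eq_of_tendsto_of_dist_le_mul_add {X ι : Type*} [MetricSpace X] {l : Filter ι} [l.NeBot]
    {u v : ι → X} {a b : X} {lam : ℝ} (hlam : lam < 1)
    (hu : Tendsto u l (𝓝 a)) (hv : Tendsto v l (𝓝 a))
    (h : ∀ k, dist (v k) b ≤ lam * (dist (u k) (v k) + dist a b)) : b = a := by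
  have hlim : dist a b ≤ lam * (dist a a + dist a b) :=
    le_of_tendsto_of_tendsto' (hv.dist tendsto_const_nhds)
      (((hu.dist hv).add tendsto_const_nhds).const_mul lam) h
  rw [dist_self, zero_add] at hlim
  have : dist a b ≤ 0 := by nlinarith [dist_nonneg (x := a) (y := b)]
  exact (dist_le_zero.mp this).symm

section JungckSequence

variable {X : Type*} {f g : X → X} {x : ℕ → X}

theorem exists_jungck_seq (hrange : Set.range f ⊆ Set.range g) (x₀ : X) :
    ∃ x : ℕ → X, x 0 = x₀ ∧ ∀ n, g (x (n + 1)) = f (x n) := by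
  choose h hh using fun w => hrange ⟨w, rfl⟩
  exact ⟨fun n => h^[n] x₀, rfl, fun n => by simp only [Function.iterate_succ_apply', hh]⟩

variable (hx : ∀ n, g (x (n + 1)) = f (x n))
include hx

theorem jungck_seq_le_succ [Preorder X] (hmonof : ∀ x y : X, g x ≤ g y → f x ≤ f y)
    (h₀ : g (x 0) ≤ f (x 0)) (n : ℕ) : g (x n) ≤ g (x (n + 1)) := by
  induction n with
  | zero => rwa [hx 0]
  | succ n ih => rw [hx (n + 1), hx n]; exact hmonof _ _ ih

theorem jungck_seq_dist_succ_le [Preorder X] [PseudoMetricSpace X] {lam : ℝ} (hlam : lam < 1)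
    (hcontr : ∀ x y : X, g x ≤ g y →
      dist (f x) (f y) ≤ lam * (dist (g x) (f x) + dist (g y) (f y)))
    (hmono : ∀ n, g (x n) ≤ g (x (n + 1))) (n : ℕ) :
    dist (g (x (n + 1))) (g (x (n + 2))) ≤ lam / (1 - lam) * dist (g (x n)) (g (x (n + 1))) := by
  apply le_div_one_sub_mul_of_le_mul_add hlam
  have hc := hcontr (x n) (x (n + 1)) (hmono n)
  rwa [← hx n, ← hx (n + 1)] at hc

end JungckSequence

theorem ordered_coincidence_kannan
    {X : Type*} [PartialOrder X] [MetricSpace X] [CompleteSpace X]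
    (f g : X → X) (hrange : Set.range f ⊆ Set.range g)
    (hclosed : IsClosed (Set.range g))
    (hmonof : ∀ x y : X, g x ≤ g y → f x ≤ f y)
    (lam : ℝ) (hlam0 : 0 < lam) (hlam1 : lam < 1 / 2)
    (hcontr : ∀ x y : X, g x ≤ g y →
      dist (f x) (f y) ≤ lam * (dist (g x) (f x) + dist (g y) (f y)))
    (hx0 : ∃ x0 : X, g x0 ≤ f x0)
    (hreg : ∀ (x : ℕ → X) (z : X), (∀ n, g (x n) ≤ g (x (n + 1))) →
      Tendsto (fun n => g (x n)) atTop (𝓝 (g z)) →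
      ∃ φ : ℕ → ℕ, StrictMono φ ∧ ∀ k, g (x (φ k)) ≤ g z) :
    ∃ z : X, f z = g z := by
  obtain ⟨x₀, hx₀⟩ := hx0
  obtain ⟨x, rfl, hx⟩ := exists_jungck_seq hrange x₀
  have hmono := jungck_seq_le_succ hx hmonof hx₀
  have hcauchy : CauchySeq fun n => g (x n) :=
    cauchySeq_of_dist_succ_le_mul (div_nonneg hlam0.le (by linarith))
      ((div_lt_one (by linarith)).mpr (by linarith))
      (jungck_seq_dist_succ_le hx (by linarith) hcontr hmono)
  obtain ⟨y, hy⟩ := cauchySeq_tendsto_of_complete hcauchy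
  obtain ⟨z, rfl⟩ := hclosed.mem_of_tendsto hy (Eventually.of_forall fun n => ⟨x n, rfl⟩)
  obtain ⟨φ, hφ, hφz⟩ := hreg x z hmono hy
  have hgφ : Tendsto (fun k => g (x (φ k))) atTop (𝓝 (g z)) := hy.comp hφ.tendsto_atTop
  have hfφ : Tendsto (fun k => f (x (φ k))) atTop (𝓝 (g z)) := by
    simpa only [Function.comp_def, hx] using
      ((tendsto_add_atTop_iff_nat 1).mpr hy).comp hφ.tendsto_atTop
  exact ⟨z, eq_of_tendsto_of_dist_le_mul_add (by linarith) hgφ hfφ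
    fun k => hcontr (x (φ k)) z (hφz k)⟩
end

section
/- Let (X,d) be a metric space, f, g : X → X, ψ a (c)-comparison function, and α : X × X → [0,∞) with α(gx,gy)·d(fx,fy) ≤ ψ(M(gx,gy)) for all x, y, where M(gx,gy) = max{d(gx,gy), (d(gx,fx)+d(gy,fy))/2, (d(gx,fy)+d(gy,fx))/2}. If {xₙ} satisfies fxₙ = gxₙ₊₁ and α(gxₙ, gxₙ₊₁) ≥ 1 for all n, and d(fxₙ, fxₙ₊₁) > 0 for all n, then d(fxₙ, fxₙ₊₁) ≤ ψⁿ(d(fx₀, fx₁)) for all n ≥ 1. -/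
/-!
Along the Picard sequence the three quantities inside `M` are bounded by the larger of two
consecutive distances `d n` and `d (n + 1)` (the third by the triangle inequality), so
`d (n + 1) ≤ ψ (max (d n) (d (n + 1)))`. Since `ψ t < t` for `t > 0`, the maximum cannot be
`d (n + 1)` unless it is `d n` as well, hence `d (n + 1) ≤ ψ (d n)`, and the bound follows by
induction because `ψ` is nondecreasing.
-/

open Set

theorem lt_self_of_summable_iterate {ψ : ℝ → ℝ} (hmono : MonotoneOn ψ (Ici 0)) {t : ℝ}
    (ht : 0 < t) (hsum : Summable fun n : ℕ => ψ^[n + 1] t) : ψ t < t := by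
  by_contra! hle
  have hiter : ∀ n : ℕ, t ≤ ψ^[n + 1] t := by
    intro n
    induction n with
    | zero => simpa using hle
    | succ k ih =>
      calc t ≤ ψ t := hle
        _ ≤ ψ (ψ^[k + 1] t) := hmono ht.le (ht.le.trans ih) ih
        _ = ψ^[k + 2] t := (Function.iterate_succ_apply' ψ (k + 1) t).symm
  obtain ⟨n, hn⟩ := (hsum.tendsto_atTop_zero.eventually_lt_const ht).exists
  exact (hiter n).not_gt hn

theorem le_apply_of_le_apply_max {ψ : ℝ → ℝ} (hlt : ∀ t, 0 < t → ψ t < t) {a b : ℝ}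
    (ha : 0 ≤ a) (hb : b ≤ ψ (max a b)) : b ≤ ψ a := by
  rcases le_or_gt b a with hba | hab
  · rwa [max_eq_left hba] at hb
  · rw [max_eq_right hab.le] at hb
    exact absurd (hlt b (ha.trans_lt hab)) hb.not_gt

theorem max_dist_le_max_dist {X : Type*} [PseudoMetricSpace X] (u v w : X) :
    max (dist u v) (max ((dist u v + dist v w) / 2) ((dist u w + dist v v) / 2)) ≤
      max (dist u v) (dist v w) := by
  have htri := dist_triangle u v w
  have hu := le_max_left (dist u v) (dist v w)
  have hv := le_max_right (dist u v) (dist v w)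
  rw [dist_self, add_zero]
  exact max_le hu (max_le (by linarith) (by linarith))

theorem dist_le_of_le_apply_max_dist {X : Type*} [PseudoMetricSpace X] {ψ : ℝ → ℝ}
    (hmono : MonotoneOn ψ (Ici 0)) (hlt : ∀ t, 0 < t → ψ t < t) {α : ℝ} (hα : 1 ≤ α)
    {u v w : X}
    (h : α * dist v w ≤
      ψ (max (dist u v) (max ((dist u v + dist v w) / 2) ((dist u w + dist v v) / 2)))) :
    dist v w ≤ ψ (dist u v) := by
  refine le_apply_of_le_apply_max hlt dist_nonneg ?_
  calc dist v w ≤ α * dist v w := le_mul_of_one_le_left dist_nonneg hα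
    _ ≤ _ := h
    _ ≤ ψ (max (dist u v) (dist v w)) :=
      hmono (dist_nonneg.trans (le_max_left _ _)) (dist_nonneg.trans (le_max_left _ _))
        (max_dist_le_max_dist u v w)

theorem le_iterate_of_succ_le_apply {ψ : ℝ → ℝ} (hmono : MonotoneOn ψ (Ici 0))
    {d : ℕ → ℝ} (hd : ∀ n, 0 ≤ d n) (hstep : ∀ n, d (n + 1) ≤ ψ (d n)) (n : ℕ) :
    d n ≤ ψ^[n] (d 0) := by
  induction n with
  | zero => rfl
  | succ k ih =>
    calc d (k + 1) ≤ ψ (d k) := hstep k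
      _ ≤ ψ (ψ^[k] (d 0)) := hmono (hd k) ((hd k).trans ih) ih
      _ = ψ^[k + 1] (d 0) := (Function.iterate_succ_apply' ψ k _).symm

theorem iterate_bound_for_picard_sequence_general
    {X : Type*} [MetricSpace X]
    (f g : X → X)
    (ψ : ℝ → ℝ)
    (hmono : ∀ s t : ℝ, 0 ≤ s → s ≤ t → ψ s ≤ ψ t)
    (hsum : ∀ t : ℝ, 0 < t → Summable (fun n : ℕ => ψ^[n + 1] t))
    (α : X → X → ℝ)
    (hcontr : ∀ x y : X, α (g x) (g y) * dist (f x) (f y) ≤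
      ψ (max (dist (g x) (g y)) (max ((dist (g x) (f x) + dist (g y) (f y)) / 2)
        ((dist (g x) (f y) + dist (g y) (f x)) / 2))))
    (x : ℕ → X)
    (hpic : ∀ n : ℕ, f (x n) = g (x (n + 1)))
    (halpha : ∀ n : ℕ, 1 ≤ α (g (x n)) (g (x (n + 1)))) :
    ∀ n : ℕ, 1 ≤ n →
      dist (f (x n)) (f (x (n + 1))) ≤ ψ^[n] (dist (f (x 0)) (f (x 1))) := by
  have hmonoOn : MonotoneOn ψ (Ici 0) := fun s hs t _ hst => hmono s t hs hst
  have hlt : ∀ t, 0 < t → ψ t < t := fun t ht =>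
    lt_self_of_summable_iterate hmonoOn ht (hsum t ht)
  have hstep : ∀ n,
      dist (f (x (n + 1))) (f (x (n + 2))) ≤ ψ (dist (f (x n)) (f (x (n + 1)))) := by
    intro n
    have hα := halpha (n + 1)
    have hc := hcontr (x (n + 1)) (x (n + 2))
    rw [← hpic n, ← hpic (n + 1)] at hα hc
    exact dist_le_of_le_apply_max_dist hmonoOn hlt hα hc
  exact fun n _ => le_iterate_of_succ_le_apply (d := fun n => dist (f (x n)) (f (x (n + 1))))
    hmonoOn (fun _ => dist_nonneg) hstep n

theorem iterate_bound_for_picard_sequence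
    {X : Type*} [MetricSpace X]
    (f g : X → X)
    (ψ : ℝ → ℝ)
    (hmono : ∀ s t : ℝ, 0 ≤ s → s ≤ t → ψ s ≤ ψ t)
    (hnonneg : ∀ t : ℝ, 0 ≤ t → 0 ≤ ψ t)
    (hsum : ∀ t : ℝ, 0 < t → Summable (fun n : ℕ => ψ^[n + 1] t))
    (α : X → X → ℝ) (hα : ∀ x y, 0 ≤ α x y)
    (hcontr : ∀ x y : X, α (g x) (g y) * dist (f x) (f y) ≤
      ψ (max (dist (g x) (g y)) (max ((dist (g x) (f x) + dist (g y) (f y)) / 2)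
        ((dist (g x) (f y) + dist (g y) (f x)) / 2))))
    (x : ℕ → X)
    (hpic : ∀ n : ℕ, f (x n) = g (x (n + 1)))
    (halpha : ∀ n : ℕ, 1 ≤ α (g (x n)) (g (x (n + 1))))
    (hpos : ∀ n : ℕ, 0 < dist (f (x n)) (f (x (n + 1)))) :
    ∀ n : ℕ, 1 ≤ n →
      dist (f (x n)) (f (x (n + 1))) ≤ ψ^[n] (dist (f (x 0)) (f (x 1))) :=
  iterate_bound_for_picard_sequence_general f g ψ hmono hsum α hcontr x hpic halpha
end
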